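/- arXiv:2212.01149 — 2 statements merged into one kernel-verified Lean document; each statement's English description precedes it below -/
import Mathlib

section
/- The restriction to B_∞ of the σ-algebra generated by the principal stem-sets equals the restriction to B_∞ of the σ-algebra of covariant events: {G ∩ B_∞ : G ∈ R(Ŝ)} = {G ∩ B_∞ : G ∈ R}. -/
open MeasurableSpace MeasureTheory Set

/-- An (infinite) causal set: an irreflexive, transitive relation on ℕ
satisfying the natural-labeling condition `x ≺ y → x < y`.  The type of all
such causets plays the role of Ω. -/
structure Causet where
  rel : ℕ → ℕ → Prop
  irrefl : ∀ x, ¬ rel x x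
  trans : ∀ x y z, rel x y → rel y z → rel x z
  lt_of_rel : ∀ x y, rel x y → x < y

/-- A finite causet on ground-set `{0, …, n-1}` with natural labeling. -/
structure FinCauset (n : ℕ) where
  rel : ℕ → ℕ → Prop
  bounded : ∀ x y, rel x y → x < n ∧ y < n
  irrefl : ∀ x, ¬ rel x x
  trans : ∀ x y z, rel x y → rel y z → rel x z
  lt_of_rel : ∀ x y, rel x y → x < y

/-- The cylinder set of a finite causet `C` on `{0,…,n-1}`: all causets whose
restriction to `{0,…,n-1}` equals `C`. -/
def cyl {n : ℕ} (C : FinCauset n) : Set Causet :=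
  { D | ∀ x y, x < n → y < n → (D.rel x y ↔ C.rel x y) }

/-- The σ-algebra 𝔐 generated by all cylinder sets. -/
def cylAlgebra : MeasurableSpace Causet :=
  .generateFrom { E | ∃ n, 0 < n ∧ ∃ C : FinCauset n, E = cyl C }

/-- Order isomorphism between two (infinite) causets. -/
def Iso (C D : Causet) : Prop :=
  ∃ f : ℕ ≃ ℕ, ∀ x y, C.rel x y ↔ D.rel (f x) (f y)

/-- A set of causets is covariant if it is closed under order isomorphism. -/
def CovariantEvent (E : Set Causet) : Prop :=
  ∀ C D : Causet, Iso C D → C ∈ E → D ∈ E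

/-- Membership in the σ-algebra R of covariant events: measurable w.r.t. 𝔐
and closed under order isomorphism. -/
def MemR (E : Set Causet) : Prop :=
  MeasurableSet[cylAlgebra] E ∧ CovariantEvent E

/-- A stem of a causet: a finite down-set. -/
def IsStem (D : Causet) (A : Set ℕ) : Prop :=
  A.Finite ∧ ∀ x y, y ∈ A → D.rel x y → x ∈ A

/-- The stem-set of (the order of) the finite causet `C`: all causets
containing a stem order-isomorphic to `C`. -/
def stemSet {n : ℕ} (C : FinCauset n) : Set Causet :=
  { D | ∃ A : Set ℕ, IsStem D A ∧
      ∃ f : {x : ℕ // x < n} ≃ A,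
        ∀ x y : {x : ℕ // x < n}, C.rel x.1 y.1 ↔ D.rel (f x).1 (f y).1 }

/-- The collection S of all stem-sets. -/
def stemSets : Set (Set Causet) :=
  { E | ∃ n, 0 < n ∧ ∃ C : FinCauset n, E = stemSet C }

/-- The σ-algebra R(S) generated by the stem-sets. -/
def stemAlgebra : MeasurableSpace Causet := .generateFrom stemSets

/-- A rogue: a causet `U` for which there is a non-isomorphic causet `V`
belonging to exactly the same stem-sets. -/
def IsRogue (U : Causet) : Prop :=
  ∃ V : Causet, ¬ Iso U V ∧
    ∀ (n : ℕ) (C : FinCauset n), 0 < n → (V ∈ stemSet C ↔ U ∈ stemSet C)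

/-- Θ: the set of rogues. -/
def Theta : Set Causet := { U | IsRogue U }

/-- `A` is the past of a break of `D`: `(A, Aᶜ)` is a partition into nonempty
parts with every element of `A` below every element of `Aᶜ`. -/
def IsBreakPast (D : Causet) (A : Set ℕ) : Prop :=
  A.Nonempty ∧ Aᶜ.Nonempty ∧ ∀ a ∈ A, ∀ b ∈ Aᶜ, D.rel a b

/-- B_∞: the set of causets with infinitely many breaks. -/
def Binf : Set Causet := { D | { A : Set ℕ | IsBreakPast D A }.Infinite }

/-- `x` is a maximal element of the restriction of the finite causet `C`
to the elements `< k`. -/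
def FMaximalBelow {n : ℕ} (C : FinCauset n) (k x : ℕ) : Prop :=
  x < k ∧ ∀ y, y < k → ¬ C.rel x y

/-- A principal finite causet: it has a unique maximal element. -/
def Principal {n : ℕ} (C : FinCauset n) : Prop :=
  ∃! x, FMaximalBelow C n x

/-- 𝔐_b: the σ-algebra generated by the principal cylinder sets. -/
def principalCylAlgebra : MeasurableSpace Causet :=
  .generateFrom { E | ∃ n, ∃ C : FinCauset n, Principal C ∧ E = cyl C }

/-- Membership in R_b: covariant events containing all or none of the
causets with finitely many breaks. -/
def MemRb (E : Set Causet) : Prop :=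
  MemR E ∧ (Binfᶜ ⊆ E ∨ Binfᶜ ⊆ Eᶜ)

/-- `x` is a maximal element of the restriction of the causet `D` to `{0,…,n}`. -/
def RMaximal (D : Causet) (n x : ℕ) : Prop :=
  x ≤ n ∧ ∀ y, y ≤ n → ¬ D.rel x y

/-- 𝔉: causets all but finitely many of whose initial-segment restrictions
have at least two maximal elements. -/
def Ffin : Set Causet :=
  { D | ∃ m : ℕ, ∀ n, m < n →
      ∃ x y, x ≠ y ∧ RMaximal D n x ∧ RMaximal D n y }

/-- The restriction of the m-causet `D` to `{0,…,n-1}` equals the n-causet `C`. -/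
def RestrEq {m n : ℕ} (D : FinCauset m) (C : FinCauset n) : Prop :=
  ∀ x y, x < n → y < n → (D.rel x y ↔ C.rel x y)

/-- Γ_{C}: the causets containing `C` as a stem but containing no principal
causet of larger cardinality as a stem (i.e. `cyl C` minus the cylinder sets
of the principal causets extending `C`). -/
def Gamma {n : ℕ} (C : FinCauset n) : Set Causet :=
  cyl C \ { X | ∃ m, n < m ∧ ∃ D : FinCauset m, Principal D ∧ RestrEq D C ∧ X ∈ cyl D }

/-- Ŝ: the collection of principal stem-sets. -/
def principalStemSets : Set (Set Causet) :=
  { E | ∃ n, ∃ C : FinCauset n, Principal C ∧ E = stemSet C }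

/-- R(Ŝ): the σ-algebra generated by the principal stem-sets. -/
def principalStemAlgebra : MeasurableSpace Causet := .generateFrom principalStemSets

/-- `x` is a post of `D`: every other element is related to `x`. -/
def IsPost (D : Causet) (x : ℕ) : Prop :=
  ∀ y, y ≠ x → D.rel y x ∨ D.rel x y

/-- P_∞: the set of causets with infinitely many posts. -/
def Pinf : Set Causet := { D | { x | IsPost D x }.Infinite }

/-- A doubly principal finite causet: both it and its restriction to
`{0,…,n-2}` have a unique maximal element. -/
def DoublyPrincipal {n : ℕ} (C : FinCauset n) : Prop :=
  Principal C ∧ ∃! x, FMaximalBelow C (n - 1) x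

/-- 𝔐_p: the σ-algebra generated by the doubly principal cylinder sets. -/
def doublyPrincipalCylAlgebra : MeasurableSpace Causet :=
  .generateFrom { E | ∃ n, ∃ C : FinCauset n, DoublyPrincipal C ∧ E = cyl C }

/-- The σ-algebra generated by the doubly principal stem-sets. -/
def doublyPrincipalStemAlgebra : MeasurableSpace Causet :=
  .generateFrom { E | ∃ n, ∃ C : FinCauset n, DoublyPrincipal C ∧ E = stemSet C }

/-!
A causet with infinitely many breaks is the ordinal sum of the finite blocks between consecutive
breaks. Relabel the elements of the block below a break `b` through a fixed representative of the
order type of the past `{0, …, b-1}`: by pigeonhole the representative has the same breaks below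
`b`, so blocks go to themselves and the result `canon D` is a causet isomorphic to `D` that depends
only on where the breaks are and on the order types of their pasts. On `B_∞` both are read off from
principal stems (the past of a later break, together with that break, is one), so `canon` is
measurable from the trace of `R(Ŝ)` on `B_∞` to `𝔐`, and a covariant event agrees on `B_∞` with its
preimage under `canon`. Conversely stem sets are measurable and covariant.
-/

namespace FinCauset

variable {n m : ℕ}

theorem ext_rel {C C' : FinCauset n} (h : ∀ x y, C.rel x y ↔ C'.rel x y) : C = C' := by
  cases C; cases C'; congr; funext x y; exact propext (h x y)

instance : Countable (FinCauset n) := by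
  refine Function.Injective.countable (f := fun C : FinCauset n => fun i j : Fin n => C.rel i j)
    fun C C' h => ext_rel fun x y => ?_
  by_cases hxy : x < n ∧ y < n
  · exact Iff.of_eq (congrFun (congrFun h ⟨x, hxy.1⟩) ⟨y, hxy.2⟩)
  · exact iff_of_false (fun hr => hxy (C.bounded x y hr)) (fun hr => hxy (C'.bounded x y hr))

def toRel (C : FinCauset n) (a b : {x // x < n}) : Prop := C.rel a b

instance isoSetoid (n : ℕ) : Setoid (FinCauset n) where
  r C C' := Nonempty (C.toRel ≃r C'.toRel)
  iseqv := ⟨fun _ => ⟨RelIso.refl _⟩, fun ⟨e⟩ => ⟨e.symm⟩, fun ⟨e⟩ ⟨e'⟩ => ⟨e.trans e'⟩⟩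

noncomputable def rep (C : FinCauset n) : FinCauset n := (⟦C⟧ : Quotient (isoSetoid n)).out

theorem rep_eq_of_equiv {C C' : FinCauset n} (h : C ≈ C') : rep C = rep C' :=
  congrArg Quotient.out (Quotient.sound h)

noncomputable def repIso (C : FinCauset n) : C.toRel ≃r (rep C).toRel :=
  (Setoid.symm (Quotient.mk_out C)).some

def restrict (C : FinCauset m) (k : ℕ) : FinCauset k where
  rel x y := C.rel x y ∧ x < k ∧ y < k
  bounded _ _ h := ⟨h.2.1, h.2.2⟩
  irrefl x h := C.irrefl x h.1
  trans x y z h h' := ⟨C.trans x y z h.1 h'.1, h.2.1, h'.2.2⟩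
  lt_of_rel x y h := C.lt_of_rel x y h.1

def BreakAt (C : FinCauset m) (k : ℕ) : Prop :=
  ∀ a b, a < k → k ≤ b → b < m → C.rel a b

end FinCauset

namespace Causet

def restrict (D : Causet) (n : ℕ) : FinCauset n where
  rel x y := D.rel x y ∧ x < n ∧ y < n
  bounded _ _ h := ⟨h.2.1, h.2.2⟩
  irrefl x h := D.irrefl x h.1
  trans x y z h h' := ⟨D.trans x y z h.1 h'.1, h.2.1, h'.2.2⟩
  lt_of_rel x y h := D.lt_of_rel x y h.1

/-- Unlike for a break, `k = 0` is allowed (vacuously). -/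
def BreakAt (D : Causet) (k : ℕ) : Prop :=
  ∀ a b, a < k → k ≤ b → D.rel a b

end Causet

open FinCauset

/-- An isomorphism from a naturally labelled order onto a relation with a break at `k`
maps `{0, …, k-1}` onto itself. -/
theorem lt_iff_lt_of_breakAt {m k : ℕ} {σ : FinCauset m} {r : ℕ → ℕ → Prop} {p : ℕ → Prop}
    (f : {x // x < m} ≃ {x // p x}) (hf : ∀ x y : {x // x < m}, σ.rel x y ↔ r (f x) (f y))
    (hkp : ∀ a < k, p a) (hbreak : ∀ a b, a < k → k ≤ b → p b → r a b) (x : {x // x < m}) :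
    x.1 < k ↔ (f x).1 < k := by
  have below : ∀ y z, (f y).1 < k → k ≤ (f z).1 → y.1 < z.1 := fun y z hy hz =>
    σ.lt_of_rel _ _ ((hf y z).2 (hbreak _ _ hy hz (f z).2))
  constructor
  · intro hx
    by_contra! hfx
    have hinto : ∀ i : Fin k, (f.symm ⟨i, hkp i i.2⟩).1 < x.1 := fun i =>
      below _ x (by simp) hfx
    have := Fin.le_of_injective (fun i : Fin k => (⟨_, hinto i⟩ : Fin x.1)) fun i j hij =>
      Fin.ext (by simpa using f.symm.injective (Subtype.ext (Fin.mk.inj_iff.1 hij)))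
    omega
  · intro hfx
    by_contra! hx
    have hinto : ∀ i : Fin (x.1 + 1), (f ⟨i, by omega⟩).1 < k := fun i => by
      by_contra! hi
      have : x.1 < i := below x _ hfx hi
      omega
    have := Fin.le_of_injective (fun i : Fin (x.1 + 1) => (⟨_, hinto i⟩ : Fin k)) fun i j hij => by
      simpa [Fin.ext_iff] using f.injective (Subtype.ext (Fin.mk.inj_iff.1 hij))
    omega

theorem Causet.mem_cyl_restrict (D : Causet) (n : ℕ) : D ∈ cyl (D.restrict n) :=
  fun _ _ hx hy => (and_iff_left ⟨hx, hy⟩).symm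

section CylAlgebra

attribute [local instance] cylAlgebra

theorem measurable_rel (x y : ℕ) : Measurable fun D : Causet => D.rel x y := by
  have h : ∀ D : Causet,
      D.rel x y ↔ ∃ C : FinCauset (max x y + 1), C.rel x y ∧ D ∈ cyl C := fun D =>
    ⟨fun hD => ⟨D.restrict _, ⟨hD, by omega, by omega⟩, D.mem_cyl_restrict _⟩,
      fun ⟨C, hC, hDC⟩ => (hDC x y (C.bounded x y hC).1 (C.bounded x y hC).2).2 hC⟩
  simp_rw [h]
  exact .exists fun C => measurable_const.and
    (measurable_mem.2 (measurableSet_generateFrom ⟨_, Nat.succ_pos _, C, rfl⟩))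

theorem measurable_of_measurable_rel {α : Type*} [MeasurableSpace α] {f : α → Causet}
    (hf : ∀ x y, Measurable fun a => (f a).rel x y) : Measurable f := by
  refine measurable_generateFrom ?_
  rintro _ ⟨n, -, C, rfl⟩
  exact measurableSet_setOfPred.2 <| .forall fun x => .forall fun y =>
    measurable_const.imp <| measurable_const.imp <| (hf x y).iff measurable_const

theorem mem_stemSet_iff {m : ℕ} {σ : FinCauset m} {D : Causet} :
    D ∈ stemSet σ ↔ ∃ g : Fin m → ℕ, Function.Injective g ∧
      (∀ a i, D.rel a (g i) → a ∈ range g) ∧ ∀ i j : Fin m, σ.rel i j ↔ D.rel (g i) (g j) := by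
  constructor
  · rintro ⟨A, ⟨-, hdown⟩, f, hf⟩
    refine ⟨fun i => f (Fin.equivSubtype i), fun i j hij => ?_, fun a i ha => ?_,
      fun i j => hf (Fin.equivSubtype i) (Fin.equivSubtype j)⟩
    · exact Fin.ext (by simpa using f.injective (Subtype.ext hij))
    · obtain ⟨x, hx⟩ := f.surjective ⟨a, hdown a _ (f _).2 ha⟩
      exact ⟨Fin.equivSubtype.symm x, by simp [hx]⟩
  · rintro ⟨g, hg, hdown, hσ⟩
    refine ⟨range g, ⟨finite_range g, fun a _ ⟨i, hi⟩ ha => hdown a i (hi ▸ ha)⟩,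
      Fin.equivSubtype.symm.trans (Equiv.ofInjective g hg),
      fun x y => hσ (Fin.equivSubtype.symm x) (Fin.equivSubtype.symm y)⟩

theorem measurableSet_stemSet {m : ℕ} (σ : FinCauset m) : MeasurableSet (stemSet σ) := by
  simp_rw [← measurable_mem, mem_stemSet_iff]
  exact .exists fun g => measurable_const.and <|
    (Measurable.forall fun a => .forall fun i =>
      (measurable_rel a (g i)).imp measurable_const).and <|
    .forall fun i => .forall fun j => measurable_const.iff (measurable_rel _ _)

end CylAlgebra

theorem Iso.symm {C D : Causet} (h : Iso C D) : Iso D C := by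
  obtain ⟨f, hf⟩ := h
  exact ⟨f.symm, fun x y => by simpa using (hf (f.symm x) (f.symm y)).symm⟩

theorem covariantEvent_stemSet {m : ℕ} (σ : FinCauset m) : CovariantEvent (stemSet σ) := by
  rintro C D ⟨F, hF⟩ ⟨A, ⟨hfin, hdown⟩, f, hf⟩
  refine ⟨F '' A, ⟨hfin.image F, ?_⟩, f.trans (Equiv.Set.image F A F.injective),
    fun x y => (hf x y).trans (hF _ _)⟩
  rintro x _ ⟨a, ha, rfl⟩ hxa
  exact ⟨F.symm x, hdown _ a ha ((hF _ a).2 (by simpa using hxa)), by simp⟩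

def covariantSets : MeasurableSpace Causet where
  MeasurableSet' := CovariantEvent
  measurableSet_empty _ _ _ h := h
  measurableSet_compl _ hE C D hCD hC hD := hC (hE D C hCD.symm hD)
  measurableSet_iUnion _ hE C D hCD hC := by
    obtain ⟨i, hi⟩ := mem_iUnion.1 hC
    exact mem_iUnion.2 ⟨i, hE i C D hCD hi⟩

theorem memR_of_measurableSet {G : Set Causet}
    (hG : MeasurableSet[principalStemAlgebra] G) : MemR G := by
  have hcyl : principalStemAlgebra ≤ cylAlgebra := generateFrom_le <| by
    rintro _ ⟨m, σ, -, rfl⟩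
    exact measurableSet_stemSet σ
  have hcov : principalStemAlgebra ≤ covariantSets := generateFrom_le <| by
    rintro _ ⟨m, σ, -, rfl⟩
    exact covariantEvent_stemSet σ
  exact ⟨hcyl G hG, hcov G hG⟩

namespace Causet

variable {D : Causet}

theorem exists_breakAt_of_isBreakPast {A : Set ℕ} (hA : IsBreakPast D A) :
    ∃ k, D.BreakAt k ∧ A = Iio k := by
  obtain ⟨-, hAc, hrel⟩ := hA
  have hk : sInf Aᶜ ∈ Aᶜ := Nat.sInf_mem hAc
  have hA : A = Iio (sInf Aᶜ) := by
    ext x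
    exact ⟨fun hx => D.lt_of_rel _ _ (hrel x hx _ hk),
      fun hx => by_contra fun hxA => (Nat.sInf_le hxA).not_gt hx⟩
  refine ⟨sInf Aᶜ, fun a b ha hb => hrel a (hA ▸ ha) b fun hbA => ?_, hA⟩
  rw [hA] at hbA
  exact (hbA : b < sInf Aᶜ).not_ge hb

theorem exists_breakAt_gt (hD : D ∈ Binf) (x : ℕ) : ∃ k, x < k ∧ D.BreakAt k := by
  by_contra! h
  refine hD (((finite_Iic x).image Iio).subset fun A hA => ?_)
  obtain ⟨k, hk, rfl⟩ := exists_breakAt_of_isBreakPast hA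
  exact ⟨k, not_lt.1 fun hxk => h k hxk hk, rfl⟩

theorem mem_stemSet_restrict (D : Causet) (n : ℕ) : D ∈ stemSet (D.restrict n) :=
  ⟨Iio n, ⟨finite_Iio n, fun x _ hy hxy => (D.lt_of_rel x _ hxy).trans hy⟩,
    Equiv.refl _, fun x y => and_iff_left ⟨x.2, y.2⟩⟩

theorem principal_restrict_succ {b : ℕ} (hb : D.BreakAt b) : Principal (D.restrict (b + 1)) := by
  refine ⟨b, ⟨b.lt_succ_self, fun y _ hby => (D.lt_of_rel _ _ hby.1).not_ge (by omega)⟩, ?_⟩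
  rintro x ⟨hx, hmax⟩
  by_contra hxb
  exact hmax b b.lt_succ_self ⟨hb x b (by omega) le_rfl, hx, b.lt_succ_self⟩

theorem breakAt_restrict_of_mem_stemSet {k m : ℕ} {σ : FinCauset m} (hk : D.BreakAt k)
    (hkm : k < m) (hσ : D ∈ stemSet σ) : σ.BreakAt k ∧ σ.restrict k ≈ D.restrict k := by
  obtain ⟨A, ⟨-, hdown⟩, f, hf⟩ := hσ
  obtain ⟨c, hcA, hkc⟩ : ∃ c ∈ A, k ≤ c := by
    by_contra! h
    have := Fin.le_of_injective (fun i : Fin m => (⟨f (Fin.equivSubtype i), h _ (f _).2⟩ : Fin k))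
      fun i j hij => Fin.ext (by simpa using f.injective (Subtype.ext (Fin.mk.inj_iff.1 hij)))
    omega
  have hkA : ∀ a < k, a ∈ A := fun a ha => hdown a c hcA (hk a c ha hkc)
  have key := lt_iff_lt_of_breakAt f hf hkA fun a b ha hb _ => hk a b ha hb
  refine ⟨fun a b ha hb hbm => (hf ⟨a, by omega⟩ ⟨b, hbm⟩).2
    (hk _ _ ((key _).1 ha) (not_lt.1 fun h => ((key _).2 h).not_ge hb)), ⟨?_⟩⟩
  let e : {x // x < k} ≃ {x // x < k} :=
    (Equiv.subtypeSubtypeEquivSubtype fun h => lt_trans h hkm).symm.trans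
      ((f.subtypeEquiv key).trans (Equiv.subtypeSubtypeEquivSubtype fun h => hkA _ h))
  refine ⟨e, fun {a b} => ?_⟩
  change (D.rel (e a) (e b) ∧ (e a).1 < k ∧ (e b).1 < k) ↔ (σ.rel a b ∧ a.1 < k ∧ b.1 < k)
  rw [and_iff_left ⟨(e a).2, (e b).2⟩, and_iff_left ⟨a.2, b.2⟩]
  exact (hf ⟨a, lt_trans a.2 hkm⟩ ⟨b, lt_trans b.2 hkm⟩).symm

end Causet

/-- The right side is witnessed by the principal stem `D.restrict (b + 1)`, `b` a later break. -/
theorem breakAt_and_restrict_equiv_iff {D : Causet} (hD : D ∈ Binf) {k : ℕ} (C : FinCauset k) :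
    (D.BreakAt k ∧ D.restrict k ≈ C) ↔ ∀ m (σ : FinCauset m), Principal σ → k < m →
      D ∈ stemSet σ → σ.BreakAt k ∧ σ.restrict k ≈ C := by
  constructor
  · rintro ⟨hk, hC⟩ m σ - hkm hσ
    obtain ⟨hσk, hσD⟩ := D.breakAt_restrict_of_mem_stemSet hk hkm hσ
    exact ⟨hσk, Setoid.trans hσD hC⟩
  · intro h
    obtain ⟨b, hkb, hb⟩ := Causet.exists_breakAt_gt hD k
    obtain ⟨hσk, hσC⟩ := h _ _ (D.principal_restrict_succ hb) (by omega)
      (D.mem_stemSet_restrict (b + 1))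
    refine ⟨fun x y hx hy => ?_, ?_⟩
    · by_cases hyb : y < b + 1
      exacts [(hσk x y hx hy hyb).1, hb x y (by omega) (by omega)]
    · have : (D.restrict (b + 1)).restrict k = D.restrict k := ext_rel fun x y => by
        simp only [FinCauset.restrict, Causet.restrict]
        constructor
        · rintro ⟨⟨h, -⟩, h'⟩; exact ⟨h, h'⟩
        · rintro ⟨h, hx, hy⟩; exact ⟨⟨h, by omega, by omega⟩, hx, hy⟩
      exact this ▸ hσC

instance Binf.instMeasurableSpace : MeasurableSpace Binf := principalStemAlgebra.comap Subtype.val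

theorem measurable_mem_stemSet {m : ℕ} {σ : FinCauset m} (hσ : Principal σ) :
    Measurable fun D : Binf => D.1 ∈ stemSet σ :=
  measurable_mem.2 ⟨stemSet σ, measurableSet_generateFrom ⟨m, σ, hσ, rfl⟩, rfl⟩

theorem measurable_breakAt_and {k : ℕ} {P : FinCauset k → Prop}
    (hP : ∀ C C', C ≈ C' → P C → P C') :
    Measurable fun D : Binf => D.1.BreakAt k ∧ P (D.1.restrict k) := by
  have h : ∀ D : Binf, (D.1.BreakAt k ∧ P (D.1.restrict k)) ↔ ∃ C, P C ∧
      ∀ m (σ : FinCauset m), Principal σ → k < m → D.1 ∈ stemSet σ →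
        σ.BreakAt k ∧ σ.restrict k ≈ C := fun D => by
    simp_rw [← breakAt_and_restrict_equiv_iff D.2]
    exact ⟨fun ⟨hk, hP'⟩ => ⟨_, hP', hk, Setoid.refl _⟩,
      fun ⟨C, hC, hk, hDC⟩ => ⟨hk, hP _ _ (Setoid.symm hDC) hC⟩⟩
  simp_rw [h]
  refine .exists fun C => measurable_const.and <| .forall fun m => .forall fun σ => ?_
  by_cases hσ : Principal σ
  · exact measurable_const.imp <| measurable_const.imp <|
      (measurable_mem_stemSet hσ).imp measurable_const
  · simp [hσ]

theorem measurable_breakAt (k : ℕ) : Measurable fun D : Binf => D.1.BreakAt k := by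
  simpa using measurable_breakAt_and (k := k) (P := fun _ => True) fun _ _ _ => id

open Classical in
noncomputable def nextBreak (D : Binf) (x : ℕ) : ℕ := Nat.find (Causet.exists_breakAt_gt D.2 x)

section NextBreak

variable (D : Binf) {x y b : ℕ}

theorem nextBreak_spec (x : ℕ) : x < nextBreak D x ∧ D.1.BreakAt (nextBreak D x) := by
  classical exact Nat.find_spec (Causet.exists_breakAt_gt D.2 x)

variable {D}

theorem nextBreak_le (hb : D.1.BreakAt b) (hxb : x < b) : nextBreak D x ≤ b := by
  classical exact Nat.find_min' _ ⟨hxb, hb⟩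

theorem nextBreak_eq_iff :
    nextBreak D x = b ↔ (x < b ∧ D.1.BreakAt b) ∧ ∀ k < b, ¬(x < k ∧ D.1.BreakAt k) := by
  classical exact Nat.find_eq_iff _

theorem le_of_nextBreak_lt (h : nextBreak D x < nextBreak D y) : nextBreak D x ≤ y := by
  by_contra! hy
  exact (nextBreak_le (nextBreak_spec D x).2 hy).not_gt h

theorem nextBreak_mono (hxy : x ≤ y) : nextBreak D x ≤ nextBreak D y :=
  nextBreak_le (nextBreak_spec D y).2 (hxy.trans_lt (nextBreak_spec D y).1)

theorem measurable_nextBreak (x : ℕ) : Measurable fun D : Binf => nextBreak D x := by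
  refine measurable_to_countable' fun b => ?_
  simp_rw [preimage, mem_singleton_iff, nextBreak_eq_iff]
  exact measurableSet_setOfPred.2 <| (measurable_const.and (measurable_breakAt b)).and <|
    .forall fun k => measurable_const.imp (measurable_const.and (measurable_breakAt k)).not

end NextBreak

theorem lt_iff_repIso_lt {D : Causet} {k b : ℕ} (hk : D.BreakAt k) (hkb : k ≤ b)
    (x : {x // x < b}) : x.1 < k ↔ (repIso (D.restrict b) x).1 < k := by
  set e := repIso (D.restrict b)
  have := lt_iff_lt_of_breakAt e.symm.toEquiv (fun x y => e.symm.map_rel_iff.symm)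
    (fun a ha => ha.trans_le hkb) (fun a c ha hc hcb => ⟨hk a c ha hc, ha.trans_le hkb, hcb⟩) (e x)
  simpa using this.symm

noncomputable def canonMap (D : Binf) (x : ℕ) : ℕ :=
  (repIso (D.1.restrict (nextBreak D x)) ⟨x, (nextBreak_spec D x).1⟩).1

section Canon

variable {D : Binf} {x y b : ℕ}

theorem canonMap_of_nextBreak_eq (h : nextBreak D x = b) :
    canonMap D x = (repIso (D.1.restrict b) ⟨x, h ▸ (nextBreak_spec D x).1⟩).1 := by
  subst h; rfl

theorem nextBreak_repIso (hx : x < b) :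
    nextBreak D (repIso (D.1.restrict b) ⟨x, hx⟩) = b ↔ nextBreak D x = b := by
  rw [nextBreak_eq_iff, nextBreak_eq_iff]
  refine and_congr (and_congr_left fun _ => iff_of_true (repIso _ _).2 hx) <|
    forall₂_congr fun k hkb => not_congr <|
      and_congr_left fun hk => (lt_iff_repIso_lt hk hkb.le ⟨x, hx⟩).symm

theorem nextBreak_canonMap : nextBreak D (canonMap D x) = nextBreak D x :=
  (nextBreak_repIso _).2 rfl

theorem canonMap_lt_nextBreak : canonMap D x < nextBreak D x :=
  (repIso _ ⟨x, _⟩).2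

theorem canonMap_bijective (D : Binf) : Function.Bijective (canonMap D) := by
  constructor
  · intro x y hxy
    have hb : nextBreak D x = nextBreak D y := by
      rw [← nextBreak_canonMap, hxy, nextBreak_canonMap]
    rw [canonMap_of_nextBreak_eq hb, canonMap_of_nextBreak_eq rfl] at hxy
    simpa using (repIso _).injective (Subtype.ext hxy)
  · intro y
    set e := repIso (D.1.restrict (nextBreak D y))
    set x := e.symm ⟨y, (nextBreak_spec D y).1⟩
    have hx : nextBreak D x = nextBreak D y := (nextBreak_repIso x.2).1 (by simp [e, x])
    exact ⟨x, by simp [canonMap_of_nextBreak_eq hx, e, x]⟩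

def canonRel (D : Binf) (x y : ℕ) : Prop :=
  if nextBreak D x = nextBreak D y then (rep (D.1.restrict (nextBreak D y))).rel x y else x < y

theorem canonRel_lt (h : canonRel D x y) : x < y := by
  unfold canonRel at h
  split_ifs at h
  exacts [(rep _).lt_of_rel _ _ h, h]

end Canon

noncomputable def canon (D : Binf) : Causet where
  rel := canonRel D
  irrefl x h := lt_irrefl x (canonRel_lt h)
  lt_of_rel _ _ := canonRel_lt
  trans x y z hxy hyz := by
    have hxz := (canonRel_lt hxy).trans (canonRel_lt hyz)
    unfold canonRel at *
    by_cases hb : nextBreak D x = nextBreak D z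
    · have h₁ := nextBreak_mono (D := D) (canonRel_lt hxy).le
      have h₂ := nextBreak_mono (D := D) (canonRel_lt hyz).le
      rw [if_pos (by omega)] at hxy hyz
      rw [if_pos hb]
      rw [show nextBreak D y = nextBreak D z by omega] at hxy
      exact (rep _).trans _ _ _ hxy hyz
    · rwa [if_neg hb]

theorem rel_iff_canon_rel (D : Binf) (x y : ℕ) :
    D.1.rel x y ↔ (canon D).rel (canonMap D x) (canonMap D y) := by
  change _ ↔ canonRel D _ _
  unfold canonRel
  rw [nextBreak_canonMap, nextBreak_canonMap]
  rcases lt_trichotomy (nextBreak D x) (nextBreak D y) with h | h | h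
  · rw [if_neg h.ne]
    have hy := le_of_nextBreak_lt h
    have hcy := le_of_nextBreak_lt (y := canonMap D y) (h.trans_eq nextBreak_canonMap.symm)
    exact iff_of_true ((nextBreak_spec D x).2 x y (nextBreak_spec D x).1 hy)
      (canonMap_lt_nextBreak.trans_le hcy)
  · rw [if_pos h, canonMap_of_nextBreak_eq h, canonMap_of_nextBreak_eq rfl]
    refine ((repIso _).map_rel_iff.trans ?_).symm
    exact and_iff_left ⟨h.symm.trans_gt (nextBreak_spec D x).1, (nextBreak_spec D y).1⟩
  · rw [if_neg h.ne']
    have hx := le_of_nextBreak_lt h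
    have hcx := le_of_nextBreak_lt (y := canonMap D x) (h.trans_eq nextBreak_canonMap.symm)
    exact iff_of_false (fun hr => (D.1.lt_of_rel _ _ hr).not_ge
        ((nextBreak_spec D y).1.le.trans hx))
      (canonMap_lt_nextBreak.trans_le hcx).not_gt

theorem iso_canon (D : Binf) : Iso D.1 (canon D) :=
  ⟨Equiv.ofBijective _ (canonMap_bijective D), rel_iff_canon_rel D⟩

theorem measurable_canon_rel (x y : ℕ) : Measurable fun D : Binf => (canon D).rel x y := by
  have hrep : Measurable fun D : Binf => (rep (D.1.restrict (nextBreak D y))).rel x y := by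
    have h : ∀ D : Binf, (rep (D.1.restrict (nextBreak D y))).rel x y ↔
        ∃ b, nextBreak D y = b ∧ D.1.BreakAt b ∧ (rep (D.1.restrict b)).rel x y := fun D =>
      ⟨fun h => ⟨_, rfl, (nextBreak_spec D y).2, h⟩, by rintro ⟨b, rfl, -, h⟩; exact h⟩
    simp_rw [h]
    exact .exists fun b => ((measurable_nextBreak y).eq_const b).and <|
      measurable_breakAt_and (P := fun C => (rep C).rel x y) fun C C' hC h =>
        rep_eq_of_equiv hC ▸ h
  exact Measurable.ite (measurableSet_eq_fun (measurable_nextBreak x) (measurable_nextBreak y))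
    hrep measurable_const

theorem exists_measurableSet_inter_Binf_eq {G : Set Causet} (hG : MemR G) :
    ∃ G', MeasurableSet[principalStemAlgebra] G' ∧ G' ∩ Binf = G ∩ Binf := by
  have hcanon : (Subtype.val : Binf → Causet) ⁻¹' G = canon ⁻¹' G :=
    ext fun D => ⟨hG.2 _ _ (iso_canon D), hG.2 _ _ (iso_canon D).symm⟩
  obtain ⟨G', hG', hpre⟩ : MeasurableSet ((Subtype.val : Binf → Causet) ⁻¹' G) :=
    hcanon ▸ measurable_of_measurable_rel measurable_canon_rel hG.1
  exact ⟨G', hG', by rwa [inter_comm, inter_comm G, ← Subtype.preimage_coe_eq_preimage_coe_iff]⟩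

/-- {G ∩ B_∞ : G ∈ R(Ŝ)} = {G ∩ B_∞ : G ∈ R}. -/
theorem stmt_15 :
    { E : Set Causet | ∃ G, MeasurableSet[principalStemAlgebra] G ∧ E = G ∩ Binf }
      = { E : Set Causet | ∃ G, MemR G ∧ E = G ∩ Binf } := by
  ext E
  constructor
  · rintro ⟨G, hG, rfl⟩
    exact ⟨G, memR_of_measurableSet hG, rfl⟩
  · rintro ⟨G, hG, rfl⟩
    obtain ⟨G', hG', hG'G⟩ := exists_measurableSet_inter_Binf_eq hG
    exact ⟨G', hG', hG'G.symm⟩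
end

section
/- Let E ∈ R(S). If E belongs to both R_b and R(Ŝ), then E is either the empty set or all of Ω. -/
open MeasurableSpace MeasureTheory Set

/-!
Spread a causet `D` over the even numbers and make every odd number an isolated point. The
resulting causet `D.evenCopy` has no breaks, yet it has the same principal stems as `D`: a stem
of `D.evenCopy` made of even numbers is a copy of a stem of `D`, and a stem containing an
isolated point can only be principal if it is the one-point order, which is a stem of every
causet. Hence every event in `R(Ŝ)` is invariant under `D ↦ D.evenCopy`, so it contains all
causets as soon as it contains those with finitely many breaks, and none as soon as it
contains none of them.
-/

open InitialSeg

theorem FinCauset.fMaximalBelow_pred {n : ℕ} (C : FinCauset n) (hn : 0 < n) :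
    FMaximalBelow C n (n - 1) :=
  ⟨by omega, fun _ _ h => by have := C.lt_of_rel _ _ h; omega⟩

theorem Principal.eq_one_of_isolated {n : ℕ} {C : FinCauset n} (hC : Principal C) {x : ℕ}
    (hx : x < n) (hiso : ∀ y < n, ¬ C.rel x y ∧ ¬ C.rel y x) : n = 1 := by
  obtain ⟨m, -, hm⟩ := hC
  have hxm : x = m := hm x ⟨hx, fun y hy => (hiso y hy).1⟩
  have hlast : n - 1 = m := hm (n - 1) (C.fMaximalBelow_pred (by omega))
  by_contra hn
  -- the only element above `n - 2` could be `n - 1 = x`, which is isolated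
  have hpen : FMaximalBelow C n (n - 2) := by
    refine ⟨by omega, fun y hy h => ?_⟩
    have := C.lt_of_rel _ _ h
    obtain rfl : y = x := by omega
    exact (hiso (n - 2) (by omega)).2 h
  have := hm (n - 2) hpen
  omega

theorem notMem_Binf_of_isolated {D : Causet} {x : ℕ}
    (hiso : ∀ y, ¬ D.rel x y ∧ ¬ D.rel y x) : D ∉ Binf := by
  have hnone : ∀ A, ¬ IsBreakPast D A := by
    rintro A ⟨⟨a, ha⟩, ⟨b, hb⟩, hbreak⟩
    by_cases hxA : x ∈ A
    · exact (hiso b).1 (hbreak x hxA b hb)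
    · exact (hiso a).2 (hbreak a ha x hxA)
  simp [Binf, hnone]

theorem mem_stemSet_of_one (C : FinCauset 1) (D : Causet) : D ∈ stemSet C := by
  refine ⟨{0}, ⟨finite_singleton 0, fun x y hy h => ?_⟩,
    Equiv.subtypeEquivRight fun _ => Nat.lt_one_iff, fun ⟨x, hx⟩ ⟨y, hy⟩ => ?_⟩
  · have := D.lt_of_rel x y h
    simp_all
  · obtain rfl := Nat.lt_one_iff.1 hx
    obtain rfl := Nat.lt_one_iff.1 hy
    exact iff_of_false (C.irrefl 0) (D.irrefl 0)

section InitialSeg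

variable {D D' : Causet} {n : ℕ} {C : FinCauset n}

theorem mem_stemSet_of_initialSeg (g : D.rel ≼i D'.rel) (h : D ∈ stemSet C) :
    D' ∈ stemSet C := by
  obtain ⟨A, ⟨hA, hdown⟩, f, hf⟩ := h
  refine ⟨g '' A, ⟨hA.image g, ?_⟩, f.trans (Equiv.Set.image g A g.injective), fun x y => ?_⟩
  · rintro x _ ⟨b, hb, rfl⟩ hxb
    obtain ⟨a, rfl⟩ := g.mem_range_of_rel hxb
    exact ⟨a, hdown a b hb (g.map_rel_iff.1 hxb), rfl⟩
  · simp [hf x y, g.map_rel_iff]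

theorem mem_stemSet_of_initialSeg_of_subset_range (g : D.rel ≼i D'.rel) {A : Set ℕ}
    (hA : IsStem D' A) (hAg : A ⊆ range g) (f : {x : ℕ // x < n} ≃ A)
    (hf : ∀ x y : {x : ℕ // x < n}, C.rel x.1 y.1 ↔ D'.rel (f x).1 (f y).1) :
    D ∈ stemSet C := by
  let e : g ⁻¹' A ≃ A :=
    (Equiv.Set.image g _ g.injective).trans (Equiv.setCongr (image_preimage_eq_of_subset hAg))
  have he : ∀ w : A, w.1 = g (e.symm w).1 := fun w => by
    conv_lhs => rw [← e.apply_symm_apply w]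
    rfl
  refine ⟨g ⁻¹' A, ⟨hA.1.preimage g.injective.injOn, fun x y hy h => hA.2 _ _ hy
    (g.map_rel_iff.2 h)⟩, f.trans e.symm, fun x y => ?_⟩
  rw [hf, he (f x), he (f y), g.map_rel_iff]
  rfl

end InitialSeg

namespace Causet

def evenCopy (D : Causet) : Causet where
  rel x y := ∃ a b, x = 2 * a ∧ y = 2 * b ∧ D.rel a b
  irrefl := by
    rintro _ ⟨a, b, rfl, hb, h⟩
    rw [show b = a by omega] at h
    exact D.irrefl a h
  trans := by
    rintro _ _ _ ⟨a, b, rfl, rfl, hab⟩ ⟨b', c, hb, rfl, hbc⟩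
    rw [show b' = b by omega] at hbc
    exact ⟨a, c, rfl, rfl, D.trans a b c hab hbc⟩
  lt_of_rel := by
    rintro _ _ ⟨a, b, rfl, rfl, h⟩
    have := D.lt_of_rel a b h
    omega

theorem evenCopy_rel_two_mul_iff (D : Causet) (a b : ℕ) :
    D.evenCopy.rel (2 * a) (2 * b) ↔ D.rel a b := by
  refine ⟨?_, fun h => ⟨a, b, rfl, rfl, h⟩⟩
  rintro ⟨a', b', ha, hb, h⟩
  rwa [show a = a' by omega, show b = b' by omega]

def toEvenCopy (D : Causet) : D.rel ≼i D.evenCopy.rel where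
  toFun a := 2 * a
  inj' _ _ h := by simpa using h
  map_rel_iff' := D.evenCopy_rel_two_mul_iff _ _
  mem_range_of_rel' := by
    rintro _ _ ⟨c, _, rfl, -, -⟩
    exact ⟨c, rfl⟩

theorem evenCopy_isolated_of_notMem_range (D : Causet) {x : ℕ} (hx : x ∉ range D.toEvenCopy)
    (y : ℕ) : ¬ D.evenCopy.rel x y ∧ ¬ D.evenCopy.rel y x := by
  constructor <;> rintro ⟨a, b, rfl, rfl, -⟩
  exacts [hx ⟨a, rfl⟩, hx ⟨b, rfl⟩]

theorem evenCopy_notMem_Binf (D : Causet) : D.evenCopy ∉ Binf :=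
  notMem_Binf_of_isolated (D.evenCopy_isolated_of_notMem_range (x := 1) fun ⟨a, ha⟩ => by
    change 2 * a = 1 at ha
    omega)

theorem evenCopy_mem_stemSet_iff {D : Causet} {n : ℕ} {C : FinCauset n} (hC : Principal C) :
    D.evenCopy ∈ stemSet C ↔ D ∈ stemSet C := by
  refine ⟨fun ⟨A, hA, f, hf⟩ => ?_, mem_stemSet_of_initialSeg D.toEvenCopy⟩
  by_cases hAg : A ⊆ range D.toEvenCopy
  · exact mem_stemSet_of_initialSeg_of_subset_range D.toEvenCopy hA hAg f hf
  obtain ⟨o, hoA, ho⟩ := not_subset.1 hAg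
  set z := f.symm ⟨o, hoA⟩
  have hfz : (f z).1 = o := by simp [z]
  have hiso : ∀ y < n, ¬ C.rel z y ∧ ¬ C.rel y z := fun y hy => by
    rw [hf z ⟨y, hy⟩, hf ⟨y, hy⟩ z, hfz]
    exact D.evenCopy_isolated_of_notMem_range ho _
  obtain rfl := hC.eq_one_of_isolated z.2 hiso
  exact mem_stemSet_of_one C D

theorem evenCopy_preimage_eq {E : Set Causet} (hE : MeasurableSet[principalStemAlgebra] E) :
    evenCopy ⁻¹' E = E := by
  have hle : principalStemAlgebra ≤ @invariants _ principalStemAlgebra evenCopy := by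
    refine generateFrom_le ?_
    rintro _ ⟨n, C, hC, rfl⟩
    exact ⟨measurableSet_generateFrom ⟨n, C, hC, rfl⟩, ext fun _ => evenCopy_mem_stemSet_iff hC⟩
  exact (hle E hE).2

end Causet

theorem stmt_18_general (E : Set Causet)
    (hb : MemRb E) (hhat : MeasurableSet[principalStemAlgebra] E) :
    E = ∅ ∨ E = Set.univ := by
  have hE := Causet.evenCopy_preimage_eq hhat
  rcases hb.2 with hB | hB
  · refine Or.inr (eq_univ_of_forall fun D => ?_)
    rw [← hE]
    exact hB D.evenCopy_notMem_Binf
  · refine Or.inl (eq_empty_of_forall_notMem fun D hD => ?_)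
    rw [← hE] at hD
    exact hB D.evenCopy_notMem_Binf hD

/-- If E ∈ R(S) belongs to both R_b and R(Ŝ) then E = ∅ or E = Ω. -/
theorem stmt_18 (E : Set Causet) (hS : MeasurableSet[stemAlgebra] E)
    (hb : MemRb E) (hhat : MeasurableSet[principalStemAlgebra] E) :
    E = ∅ ∨ E = Set.univ :=
  stmt_18_general E hb hhat
end
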